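/- arXiv:2004.04182 — 3 statements merged into one kernel-verified Lean document; each statement's English description precedes it below -/
import Mathlib

section
/- For t ≥ 1, the quadruple integral ∫_{b=0}^{1/t} ∫_{α=1-b}^{1} ∫_{a=1-b}^{α} ∫_{s=t(α-a)/a}^{(α-a)/(abα)} 1 ds da dα db equals ∫_{b=0}^{1/t} [b(b(2+b)t - 8) + 2(b(2+t) - 4)log(1-b)]/(4b) db; in particular it is O(t^{-3}) as t → ∞. -/
open MeasureTheory Filter Asymptotics intervalIntegral Real Set

/-! With `c = 1 - b`, the `s`-integral is `(α - a) / a * (1 / (b α) - t)`, and integrating in `a`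
gives `(α log (α / c) - (α - c)) * (1 / (b α) - t)`; an explicit primitive in `α`, built from
`α log α` and `α² log α`, yields the closed form. In the closed form the terms of order `b` and
`b²` cancel against the Taylor polynomial of `log (1 - b)`, so the integrand is `O(b²) = O(t⁻²)`
on `(0, 1/t]` and its integral is `O(t⁻³)`. -/

theorem integral_sub_div_self {c α : ℝ} (hc : 0 < c) (hα : 0 < α) :
    ∫ a in c..α, (α - a) / a = α * log (α / c) - (α - c) := by
  have hpos : ∀ a ∈ uIcc c α, 0 < a := fun a ha => lt_of_lt_of_le (lt_min hc hα) ha.1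
  have hinv : IntervalIntegrable (fun a : ℝ => a⁻¹) volume c α :=
    intervalIntegrable_inv (fun a ha => (hpos a ha).ne') continuousOn_id
  rw [integral_congr (g := fun a => α * a⁻¹ - 1) fun a ha => by
      field_simp [(hpos a ha).ne']]
  rw [integral_sub (hinv.const_mul α) intervalIntegrable_const,
    intervalIntegral.integral_const_mul, integral_inv_of_pos hc hα]
  simp

theorem integral_integral_one_eq {b t c α : ℝ} (hc : 0 < c) (hα : 0 < α) :
    ∫ a in c..α, ∫ _s in (t * (α - a) / a)..((α - a) / (a * b * α)), (1 : ℝ)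
      = (α * log (α / c) - (α - c)) * ((b * α)⁻¹ - t) := by
  simp only [intervalIntegral.integral_const, smul_eq_mul, mul_one]
  rw [← integral_sub_div_self hc hα, ← intervalIntegral.integral_mul_const]
  congr 1 with a
  ring

theorem hasDerivAt_outer_primitive (b t c L : ℝ) {x : ℝ} (hx : x ≠ 0) :
    HasDerivAt (fun α => b⁻¹ * (α * log α - α - L * α + c * log α)
        - t * (α ^ 2 / 2 * log α - α ^ 2 / 4 - L * α ^ 2 / 2 + c * α))
      ((x * log x - L * x + c) * ((b * x)⁻¹ - t)) x := by
  have hlog := hasDerivAt_log hx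
  have hsq := hasDerivAt_pow 2 x
  have hid := hasDerivAt_id x
  have h₁ := (((hasDerivAt_mul_log hx).sub hid).sub (hid.const_mul L)).add (hlog.const_mul c)
  have h₂ := ((((hsq.div_const 2).mul hlog).sub (hsq.div_const 4)).sub
    ((hsq.const_mul L).div_const 2)).add (hid.const_mul c)
  refine ((h₁.const_mul b⁻¹).sub (h₂.const_mul t)).congr_deriv ?_
  field_simp
  ring

theorem integral_triple_eq {b t : ℝ} (hb0 : 0 < b) (hb1 : b < 1) :
    ∫ α in (1 - b)..1, ∫ a in (1 - b)..α,
        ∫ _s in (t * (α - a) / a)..((α - a) / (a * b * α)), (1 : ℝ)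
      = (b * (b * (2 + b) * t - 8) + 2 * (b * (2 + t) - 4) * log (1 - b)) / (4 * b) := by
  set c := 1 - b
  have hc : 0 < c := by linarith
  have hpos : ∀ α ∈ uIcc c 1, 0 < α := fun α hα => lt_of_lt_of_le (lt_min hc one_pos) hα.1
  set L := log c + 1
  have hinner : ∀ α ∈ uIcc c 1, (∫ a in c..α,
      ∫ _s in (t * (α - a) / a)..((α - a) / (a * b * α)), (1 : ℝ))
        = (α * log α - L * α + c) * ((b * α)⁻¹ - t) := fun α hα => by
    rw [integral_integral_one_eq hc (hpos α hα), log_div (hpos α hα).ne' hc.ne']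
    ring
  rw [integral_congr hinner, integral_eq_sub_of_hasDerivAt
    (fun α hα => hasDerivAt_outer_primitive b t c L (hpos α hα).ne')]
  · simp only [log_one]
    field_simp
    ring
  · refine ContinuousOn.intervalIntegrable (continuousOn_of_forall_continuousAt fun α hα => ?_)
    have hα : α ≠ 0 := (hpos α hα).ne'
    fun_prop (disch := simp [hα, hb0.ne'])

theorem abs_log_one_sub_add_le {x : ℝ} (hx0 : 0 ≤ x) (hx : x ≤ 1 / 2) :
    |log (1 - x) + x + x ^ 2 / 2| ≤ 2 * x ^ 3 := by
  have h := abs_log_sub_add_sum_range_le (show |x| < 1 by rw [abs_of_nonneg hx0]; linarith) 2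
  norm_num [Finset.sum_range_succ, abs_of_nonneg hx0] at h
  calc |log (1 - x) + x + x ^ 2 / 2| = |x + x ^ 2 / 2 + log (1 - x)| := by ring_nf
    _ ≤ x ^ 3 / (1 - x) := h
    _ ≤ 2 * x ^ 3 := by
        rw [div_le_iff₀ (by linarith)]
        nlinarith [pow_nonneg hx0 3]

theorem abs_tail_integrand_le {b t : ℝ} (hb0 : 0 < b) (hb : b ≤ 1 / 2) (ht : 0 ≤ t)
    (hbt : b * t ≤ 1) :
    |(b * (b * (2 + b) * t - 8) + 2 * (b * (2 + t) - 4) * log (1 - b)) / (4 * b)|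
      ≤ 5 * b ^ 2 := by
  set E := log (1 - b) + b + b ^ 2 / 2
  have hE : |E| ≤ 2 * b ^ 3 := abs_log_one_sub_add_le hb0.le hb
  have hcoeff : |b * (2 + t) - 4| ≤ 4 := abs_le.2 ⟨by nlinarith, by nlinarith⟩
  have hsplit : (b * (b * (2 + b) * t - 8) + 2 * (b * (2 + t) - 4) * log (1 - b)) / (4 * b)
      = -b ^ 2 / 2 + (b * (2 + t) - 4) * E / (2 * b) := by
    simp only [E]
    field_simp
    ring
  rw [hsplit]
  calc |-b ^ 2 / 2 + (b * (2 + t) - 4) * E / (2 * b)|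
      ≤ b ^ 2 / 2 + |b * (2 + t) - 4| * |E| / (2 * b) := by
        refine (abs_add_le _ _).trans_eq ?_
        rw [abs_div, abs_neg, abs_two, abs_of_nonneg (by positivity : 0 ≤ b ^ 2), abs_div,
          abs_mul, abs_of_pos (by positivity : 0 < 2 * b)]
    _ ≤ b ^ 2 / 2 + 4 * (2 * b ^ 3) / (2 * b) := by gcongr
    _ ≤ 5 * b ^ 2 := by
        rw [show 4 * (2 * b ^ 3) / (2 * b) = 4 * b ^ 2 by field_simp]
        nlinarith

theorem integral_quadruple_eq {t : ℝ} (ht : 1 ≤ t) :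
    (∫ b in (0:ℝ)..(1 / t), ∫ α in (1 - b)..1, ∫ a in (1 - b)..α,
        ∫ _s in (t * (α - a) / a)..((α - a) / (a * b * α)), (1 : ℝ))
      = ∫ b in (0:ℝ)..(1 / t),
          (b * (b * (2 + b) * t - 8) + 2 * (b * (2 + t) - 4) * log (1 - b)) / (4 * b) :=
  -- not `integral_congr`: for `t = 1` the identity fails at `b = 1`, where `1 - b = 0`
  integral_congr_Ioo_of_le (by positivity) fun _ hb =>
    integral_triple_eq hb.1 (hb.2.trans_le ((div_le_one (by positivity)).2 ht))

theorem norm_integral_tail_integrand_le {t : ℝ} (ht : 2 ≤ t) :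
    ‖∫ b in (0:ℝ)..(1 / t),
        (b * (b * (2 + b) * t - 8) + 2 * (b * (2 + t) - 4) * log (1 - b)) / (4 * b)‖
      ≤ 5 * ‖t ^ (-3 : ℤ)‖ := by
  have ht0 : 0 < t := by linarith
  calc _ ≤ 5 / t ^ 2 * |1 / t - 0| := norm_integral_le_of_norm_le_const fun b hb => by
        rw [uIoc_of_le (by positivity)] at hb
        have hbt : b * t ≤ 1 := (le_div_iff₀ ht0).1 hb.2
        refine (abs_tail_integrand_le hb.1 (by nlinarith) ht0.le hbt).trans ?_
        rw [le_div_iff₀ (by positivity)]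
        nlinarith [mul_pos hb.1 ht0]
    _ = 5 * ‖t ^ (-3 : ℤ)‖ := by
        rw [norm_zpow, Real.norm_of_nonneg ht0.le, sub_zero, abs_of_pos (by positivity)]
        field_simp

/-- The Ω₁ tail integral: for t ≥ 1 the quadruple integral reduces to a single
integral in b, and it is O(t⁻³) as t → ∞. -/
theorem omega1_tail_integral :
    (∀ t : ℝ, 1 ≤ t →
      (∫ b in (0:ℝ)..(1 / t), ∫ α in (1 - b)..1, ∫ a in (1 - b)..α,
          ∫ _s in (t * (α - a) / a)..((α - a) / (a * b * α)), (1 : ℝ))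
        = ∫ b in (0:ℝ)..(1 / t),
            (b * (b * (2 + b) * t - 8) + 2 * (b * (2 + t) - 4) * Real.log (1 - b))
              / (4 * b)) ∧
    (fun t : ℝ => ∫ b in (0:ℝ)..(1 / t), ∫ α in (1 - b)..1, ∫ a in (1 - b)..α,
        ∫ _s in (t * (α - a) / a)..((α - a) / (a * b * α)), (1 : ℝ))
      =O[atTop] (fun t : ℝ => t ^ (-3 : ℤ)) := by
  refine ⟨fun t ht => integral_quadruple_eq ht, isBigO_iff.2 ⟨5, ?_⟩⟩
  filter_upwards [eventually_ge_atTop (2 : ℝ)] with t ht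
  rw [integral_quadruple_eq (by linarith)]
  exact norm_integral_tail_integrand_le ht
end

section
/- The triple integral ∫_{b=0}^{1} ∫_{α=0}^{1-b} ∫_{a=1-b}^{1} ∫_{s=0}^{(a^{-1} - t(b+α))/b} 1 ds da dα db, taken for 0 < t < 1 (so the upper limit of s is nonnegative throughout the region), equals π²/6 - 1 - t/3. -/
/-!
The integrals over `s`, `a` and `α` are elementary and leave
`(1 - b) * (-log (1 - b)) / b - t * (1 - b ^ 2) / 2` as the integrand in `b`.
For the logarithmic part, expand `(1 - b) * (-log (1 - b)) / b = ∑ (bⁿ - bⁿ⁺¹) / (n + 1)`;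
the terms are nonnegative on `[0, 1]` and integrate to `1 / (n + 1)² - (1 / (n + 1) - 1 / (n + 2))`,
so the integral is `ζ(2) - 1 = π² / 6 - 1` by the Basel problem and a telescoping sum.
-/

open MeasureTheory Real

lemma integral_inv_sub_const_div {b : ℝ} (hb0 : b ≠ 0) (hb1 : b < 1) (c : ℝ) :
    ∫ a in (1 - b)..1, (a⁻¹ - c) / b = -log (1 - b) / b - c := by
  have h0 : (0:ℝ) ∉ Set.uIcc (1 - b) 1 := by
    simp only [Set.mem_uIcc, not_or, not_and, not_le]
    constructor <;> intro <;> linarith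
  rw [intervalIntegral.integral_div, intervalIntegral.integral_sub
    (intervalIntegrable_inv_iff.2 (Or.inr h0)) intervalIntegrable_const,
    integral_inv h0, intervalIntegral.integral_const, one_div, log_inv, smul_eq_mul]
  field_simp
  ring

lemma integral_sub_mul_add (L t b : ℝ) :
    ∫ α in (0:ℝ)..(1 - b), (L - t * (b + α)) = (1 - b) * L - t * (1 - b ^ 2) / 2 := by
  rw [intervalIntegral.integral_sub intervalIntegrable_const
      ((by fun_prop : Continuous fun α => t * (b + α)).intervalIntegrable _ _),
    intervalIntegral.integral_const_mul, intervalIntegral.integral_comp_add_left (fun x => x)]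
  simp
  ring

lemma integral_mul_one_sub_sq_div_two (t : ℝ) :
    ∫ b in (0:ℝ)..1, t * (1 - b ^ 2) / 2 = t / 3 := by
  simp
  ring

lemma hasSum_pow_sub_pow_succ_div {b : ℝ} (hb0 : b ≠ 0) (hb : |b| < 1) :
    HasSum (fun n : ℕ => (b ^ n - b ^ (n + 1)) / (n + 1)) ((1 - b) * -log (1 - b) / b) := by
  rw [mul_div_right_comm]
  refine ((hasSum_pow_div_log_of_abs_lt_one hb).mul_left ((1 - b) / b)).congr_fun fun n => ?_
  field_simp
  ring

lemma integral_pow_sub_pow_succ_div (n : ℕ) :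
    ∫ b in (0:ℝ)..1, (b ^ n - b ^ (n + 1)) / (n + 1)
      = 1 / ((n : ℝ) + 1) ^ 2 - (1 / ((n : ℝ) + 1) - 1 / ((n : ℝ) + 2)) := by
  simp [intervalIntegral.integral_div, intervalIntegral.integral_sub]
  field_simp
  ring

lemma hasSum_one_div_add_one_sub_one_div_add_two :
    HasSum (fun n : ℕ => 1 / ((n : ℝ) + 1) - 1 / ((n : ℝ) + 2)) 1 := by
  have hpartial (n : ℕ) : ∑ i ∈ Finset.range n, (1 / ((i : ℝ) + 1) - 1 / ((i : ℝ) + 2))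
      = 1 - 1 / ((n : ℝ) + 1) := by
    simpa [add_assoc, one_add_one_eq_two] using
      Finset.sum_range_sub' (fun i : ℕ => 1 / ((i : ℝ) + 1)) n
  rw [hasSum_iff_tendsto_nat_of_nonneg]
  · simp_rw [hpartial]
    simpa using tendsto_const_nhds.sub (tendsto_one_div_add_atTop_nhds_zero_nat (𝕜 := ℝ))
  · intro n
    have : 1 / ((n : ℝ) + 2) ≤ 1 / ((n : ℝ) + 1) := by gcongr; norm_num
    linarith

lemma hasSum_one_div_add_one_sq : HasSum (fun n : ℕ => 1 / ((n : ℝ) + 1) ^ 2) (π ^ 2 / 6) := by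
  have := (hasSum_nat_add_iff (f := fun n : ℕ => 1 / (n : ℝ) ^ 2) 1).2
    (by simpa using hasSum_zeta_two)
  exact_mod_cast this

lemma integral_one_sub_mul_neg_log_one_sub_div :
    ∫ b in (0:ℝ)..1, (1 - b) * -log (1 - b) / b = π ^ 2 / 6 - 1 := by
  set F : ℕ → ℝ → ℝ := fun n b => (b ^ n - b ^ (n + 1)) / (n + 1) with hF
  have hF_int (n : ℕ) : Integrable (F n) (volume.restrict (Set.Ioc 0 1)) :=
    (by fun_prop : Continuous (F n)).integrableOn_Ioc
  have hF_nonneg (n : ℕ) : ∀ b ∈ Set.Ioc (0:ℝ) 1, 0 ≤ F n b := fun b hb =>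
    div_nonneg (sub_nonneg.2 (pow_le_pow_of_le_one hb.1.le hb.2 n.le_succ)) (by positivity)
  have hsum : HasSum (fun n => ∫ b in Set.Ioc 0 1, ‖F n b‖) (π ^ 2 / 6 - 1) := by
    refine (hasSum_one_div_add_one_sq.sub hasSum_one_div_add_one_sub_one_div_add_two).congr_fun
      fun n => ?_
    rw [← integral_pow_sub_pow_succ_div, intervalIntegral.integral_of_le zero_le_one]
    exact setIntegral_congr_fun measurableSet_Ioc fun b hb => norm_of_nonneg (hF_nonneg n b hb)
  have hnorm : (fun n => ∫ b in Set.Ioc 0 1, ‖F n b‖) = fun n => ∫ b in Set.Ioc 0 1, F n b :=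
    funext fun n => setIntegral_congr_fun measurableSet_Ioc fun b hb =>
      norm_of_nonneg (hF_nonneg n b hb)
  rw [intervalIntegral.integral_of_le zero_le_one, ← hsum.tsum_eq, hnorm,
    integral_tsum_of_summable_integral_norm hF_int hsum.summable]
  refine setIntegral_congr_fun measurableSet_Ioc fun b hb => ?_
  rcases hb.2.eq_or_lt with rfl | hb1
  · simp [hF]
  · exact (hasSum_pow_sub_pow_succ_div hb.1.ne' (abs_lt.2 ⟨by linarith [hb.1], hb1⟩)).tsum_eq.symm

lemma intervalIntegrable_one_sub_mul_neg_log_one_sub_div :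
    IntervalIntegrable (fun b => (1 - b) * -log (1 - b) / b) volume 0 1 := by
  -- a non-integrable function has integral `0`, and this integral is `π ^ 2 / 6 - 1 ≠ 0`
  refine intervalIntegral.intervalIntegrable_of_integral_ne_zero ?_
  rw [integral_one_sub_mul_neg_log_one_sub_div]
  nlinarith [pi_gt_three]

theorem omega3_small_t_integral_general (t : ℝ) :
    (∫ b in (0:ℝ)..1, ∫ α in (0:ℝ)..(1 - b), ∫ a in (1 - b)..1,
        ∫ _s in (0:ℝ)..((a⁻¹ - t * (b + α)) / b), (1 : ℝ))
      = Real.pi ^ 2 / 6 - 1 - t / 3 := by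
  have hslice : ∀ b ∈ Set.Ioc (0:ℝ) 1,
      (∫ α in (0:ℝ)..(1 - b), ∫ a in (1 - b)..1,
          ∫ _s in (0:ℝ)..((a⁻¹ - t * (b + α)) / b), (1 : ℝ))
        = (1 - b) * -log (1 - b) / b - t * (1 - b ^ 2) / 2 := by
    rintro b ⟨hb0, hb1⟩
    rcases hb1.eq_or_lt with rfl | hb1
    · simp
    simp only [intervalIntegral.integral_const, smul_eq_mul, mul_one, sub_zero,
      integral_inv_sub_const_div hb0.ne' hb1, integral_sub_mul_add]
    ring
  rw [intervalIntegral.integral_congr_ae (Filter.Eventually.of_forall fun b hb =>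
      hslice b (by rwa [Set.uIoc_of_le zero_le_one] at hb)),
    intervalIntegral.integral_sub intervalIntegrable_one_sub_mul_neg_log_one_sub_div
      ((by fun_prop : Continuous fun b : ℝ => t * (1 - b ^ 2) / 2).intervalIntegrable _ _),
    integral_one_sub_mul_neg_log_one_sub_div, integral_mul_one_sub_sq_div_two]

/-- The Ω₃ contribution for 0 < t < 1 equals π²/6 - 1 - t/3. -/
theorem omega3_small_t_integral (t : ℝ) (ht0 : 0 < t) (ht1 : t < 1) :
    (∫ b in (0:ℝ)..1, ∫ α in (0:ℝ)..(1 - b), ∫ a in (1 - b)..1,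
        ∫ _s in (0:ℝ)..((a⁻¹ - t * (b + α)) / b), (1 : ℝ))
      = Real.pi ^ 2 / 6 - 1 - t / 3 :=
  omega3_small_t_integral_general t
end

section
/- For every ε ∈ (0,1), the Lebesgue measure of {(a,b,s,α) : 0 < b ≤ 1, 0 < α ≤ 1-b, 1-b ≤ a ≤ 1, 0 ≤ s < (a^{-1} - ε(b+α))/b} is at least π²/6 - 1 - ε/3 > π²/6 - 1 - 1/3 > 0. In particular the gap distribution of affine lattices has support at zero: the proportion of gaps less than ε is at least ε/3. -/
/-!
After reordering the coordinates as `(b, α, a, s)`, Tonelli bounds the volume from below by the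
iterated integral over `Ω₃` of the length `(a⁻¹ - ε (b + α)) / b` of the `s`-interval; for
`ε ≤ 1` this length is nonnegative and the integral equals `π²/6 - 1 - ε/3`. Writing
`a⁻¹ - 1 = ∑ (1 - a)^(n+1)`, the `ε`-free part of the length integrates term by term to
`∑ 1/((n+2)²(n+3)) = (ζ(2) - 1) - 1/2`, and what remains is a polynomial with integral
`1/2 - ε/3`.
-/

open MeasureTheory Set Filter Topology
open scoped ENNReal

-- `(b, α, a, s) ↦ (a, b, s, α)`
noncomputable def reorderCoords : ℝ × ℝ × ℝ × ℝ ≃ᵐ ℝ × ℝ × ℝ × ℝ :=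
  (MeasurableEquiv.prodCongr (.refl ℝ) (MeasurableEquiv.prodComm.trans .prodAssoc)).trans <|
    MeasurableEquiv.prodAssoc.symm.trans <|
      (MeasurableEquiv.prodCongr .prodComm (.refl _)).trans .prodAssoc

lemma measurePreserving_reorderCoords : MeasurePreserving reorderCoords :=
  (measurePreserving_prodAssoc volume volume volume).comp <|
    (Measure.measurePreserving_swap.prod (.id volume)).comp <|
      ((measurePreserving_prodAssoc volume volume volume).symm _).comp <|
        (MeasurePreserving.id volume).prod
          ((measurePreserving_prodAssoc volume volume volume).comp Measure.measurePreserving_swap)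

lemma setLIntegral_le_prod_apply {α β : Type*} [MeasurableSpace α] [MeasurableSpace β]
    {μ : Measure α} {ν : Measure β} [SFinite ν] {s : Set α} (hs : MeasurableSet s)
    {f : α → ℝ≥0∞} {t : Set (α × β)} (h : ∀ x ∈ s, f x ≤ ν (Prod.mk x ⁻¹' t)) :
    ∫⁻ x in s, f x ∂μ ≤ μ.prod ν t :=
  calc ∫⁻ x in s, f x ∂μ ≤ ∫⁻ x in s, ν (Prod.mk x ⁻¹' toMeasurable (μ.prod ν) t) ∂μ :=
        setLIntegral_mono' hs fun x hx =>
          (h x hx).trans (measure_mono (preimage_mono (subset_toMeasurable _ _)))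
    _ ≤ ∫⁻ x, ν (Prod.mk x ⁻¹' toMeasurable (μ.prod ν) t) ∂μ := setLIntegral_le_lintegral _ _
    _ = μ.prod ν t := by
      rw [← Measure.prod_apply (measurableSet_toMeasurable _ _), measure_toMeasurable]

section IntervalLIntegral

variable {l u : ℝ}

lemma setLIntegral_Ioc_ofReal (hlu : l ≤ u) {f : ℝ → ℝ} (hf : Continuous f)
    (hf₀ : ∀ x ∈ Ioc l u, 0 ≤ f x) :
    ∫⁻ x in Ioc l u, ENNReal.ofReal (f x) = ENNReal.ofReal (∫ x in l..u, f x) := by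
  rw [intervalIntegral.integral_of_le hlu,
    ofReal_integral_eq_lintegral_ofReal hf.integrableOn_Ioc]
  exact ae_restrict_of_forall_mem measurableSet_Ioc hf₀

lemma setLIntegral_Ioc_tsum_ofReal (hlu : l ≤ u) {f : ℕ → ℝ → ℝ} (hf : ∀ n, Continuous (f n))
    (hf₀ : ∀ n, ∀ x ∈ Ioc l u, 0 ≤ f n x) :
    ∫⁻ x in Ioc l u, ∑' n, ENNReal.ofReal (f n x) =
      ∑' n, ENNReal.ofReal (∫ x in l..u, f n x) := by
  rw [lintegral_tsum fun n => (hf n).measurable.ennreal_ofReal.aemeasurable]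
  exact tsum_congr fun n => setLIntegral_Ioc_ofReal hlu (hf n) (hf₀ n)

end IntervalLIntegral

lemma hasSum_pow_succ_one_sub {a : ℝ} (h0 : 0 < a) (h2 : a < 2) :
    HasSum (fun n : ℕ => (1 - a) ^ (n + 1)) (a⁻¹ - 1) := by
  have hgeom :=
    hasSum_geometric_of_abs_lt_one (r := 1 - a) (by rw [abs_lt]; constructor <;> linarith)
  rw [sub_sub_cancel] at hgeom
  simpa using (hasSum_nat_add_iff' 1).mpr hgeom

lemma hasSum_sub_succ_of_antitone {f : ℕ → ℝ} {l : ℝ} (hf : Antitone f)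
    (hl : Tendsto f atTop (𝓝 l)) : HasSum (fun n => f n - f (n + 1)) (f 0 - l) := by
  rw [hasSum_iff_tendsto_nat_of_nonneg fun n => sub_nonneg.2 (hf n.le_succ)]
  simp_rw [Finset.sum_range_sub']
  exact tendsto_const_nhds.sub hl

lemma hasSum_one_div_sq_mul :
    HasSum (fun n : ℕ => 1 / (((n : ℝ) + 2) ^ 2 * ((n : ℝ) + 3))) (Real.pi ^ 2 / 6 - 3 / 2) := by
  have hsq : HasSum (fun n : ℕ => 1 / ((n : ℝ) + 2) ^ 2) (Real.pi ^ 2 / 6 - 1) := by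
    have := (hasSum_nat_add_iff' 2).mpr hasSum_zeta_two
    norm_num [Finset.sum_range_succ] at this
    simpa only [one_div] using this
  have htel : HasSum (fun n : ℕ => 1 / ((n : ℝ) + 2) - 1 / ((n : ℝ) + 3)) (1 / 2) := by
    have hanti : Antitone fun n : ℕ => 1 / ((n : ℝ) + 2) := fun m n h => by
      dsimp only
      gcongr
    have hlim : Tendsto (fun n : ℕ => 1 / ((n : ℝ) + 2)) atTop (𝓝 0) :=
      tendsto_const_nhds.div_atTop (tendsto_natCast_atTop_atTop.atTop_add tendsto_const_nhds)
    convert hasSum_sub_succ_of_antitone hanti hlim using 1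
    · push_cast; ring_nf
    · norm_num
  have hterm : (fun n : ℕ => 1 / (((n : ℝ) + 2) ^ 2 * ((n : ℝ) + 3))) =
      fun n : ℕ => 1 / ((n : ℝ) + 2) ^ 2 - (1 / ((n : ℝ) + 2) - 1 / ((n : ℝ) + 3)) := by
    funext n
    field_simp
    ring
  rw [hterm, show Real.pi ^ 2 / 6 - 3 / 2 = Real.pi ^ 2 / 6 - 1 - 1 / 2 by ring]
  exact hsq.sub htel

section

variable {b ε : ℝ}

lemma setLIntegral_Ioc_inv_sub_div (hb₀ : 0 < b) (hb₁ : b ≤ 1) {c : ℝ} (hc : 0 ≤ c) :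
    ∫⁻ a in Ioc (1 - b) 1, ENNReal.ofReal ((a⁻¹ - 1 + c) / b) =
      ENNReal.ofReal c + ∑' n : ℕ, ENNReal.ofReal (b ^ (n + 1) / (n + 2)) := by
  have hsplit : ∀ a ∈ Ioc (1 - b) 1, ENNReal.ofReal ((a⁻¹ - 1 + c) / b) =
      ENNReal.ofReal (c / b) + ∑' n : ℕ, ENNReal.ofReal ((1 - a) ^ (n + 1) / b) := by
    rintro a ⟨ha₀, ha₁⟩
    have hsum := (hasSum_pow_succ_one_sub (by linarith) (by linarith)).div_const b
    rw [← ENNReal.ofReal_tsum_of_nonneg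
        (fun n => div_nonneg (pow_nonneg (by linarith) _) hb₀.le) hsum.summable,
      hsum.tsum_eq, ← ENNReal.ofReal_add (by positivity)
        (div_nonneg (sub_nonneg.2 (one_le_inv_iff₀.2 ⟨by linarith, ha₁⟩)) hb₀.le),
      add_div, add_comm]
  rw [setLIntegral_congr_fun measurableSet_Ioc hsplit, lintegral_add_left measurable_const,
    setLIntegral_const, Real.volume_Ioc, sub_sub_cancel, ← ENNReal.ofReal_mul (by positivity),
    div_mul_cancel₀ c hb₀.ne', setLIntegral_Ioc_tsum_ofReal (by linarith) (fun n => by fun_prop)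
      (fun n a ha => div_nonneg (pow_nonneg (by linarith [ha.2]) _) hb₀.le)]
  congr 1
  refine tsum_congr fun n => congrArg ENNReal.ofReal ?_
  rw [intervalIntegral.integral_div,
    intervalIntegral.integral_comp_sub_left (fun x => x ^ (n + 1)), sub_self, sub_sub_cancel,
    integral_pow, zero_pow (by omega), sub_zero]
  field_simp
  push_cast
  ring

lemma setLIntegral_Ioc_one_sub_mul_add (hb₀ : 0 ≤ b) (hb₁ : b ≤ 1) (hε : ε ≤ 1) :
    ∫⁻ α in Ioc 0 (1 - b), ENNReal.ofReal (1 - ε * (b + α)) =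
      ENNReal.ofReal ((1 - b) * (1 - ε * (1 + b) / 2)) := by
  rw [setLIntegral_Ioc_ofReal (by linarith) (by fun_prop) fun α ⟨hα₀, hα₁⟩ => by
    nlinarith [mul_nonneg (sub_nonneg.2 hε) (by linarith : 0 ≤ b + α)]]
  congr 1
  simp_rw [mul_add, ← sub_sub]
  rw [intervalIntegral.integral_sub intervalIntegrable_const
    (intervalIntegral.intervalIntegrable_id.const_mul ε), intervalIntegral.integral_const_mul,
    intervalIntegral.integral_const, integral_id]
  simp only [sub_zero, smul_eq_mul]
  ring

lemma setLIntegral_Ioc_zero_one_one_sub_mul (hε : ε ≤ 1) :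
    ∫⁻ b in Ioc 0 1, ENNReal.ofReal ((1 - b) * (1 - ε * (1 + b) / 2)) =
      ENNReal.ofReal (1 / 2 - ε / 3) := by
  rw [setLIntegral_Ioc_ofReal zero_le_one (by fun_prop) fun b ⟨hb₀, hb₁⟩ =>
    mul_nonneg (by linarith)
      (by nlinarith [mul_nonneg (sub_nonneg.2 hε) (by linarith : 0 ≤ 1 + b)])]
  congr 1
  have hpoly : ∀ x : ℝ, (1 - x) * (1 - ε * (1 + x) / 2) = (1 - ε / 2) - x + ε / 2 * x ^ 2 :=
    fun x => by ring
  simp_rw [hpoly]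
  rw [intervalIntegral.integral_add
      (intervalIntegrable_const.sub intervalIntegral.intervalIntegrable_id)
      ((intervalIntegral.intervalIntegrable_pow 2).const_mul _),
    intervalIntegral.integral_sub intervalIntegrable_const intervalIntegral.intervalIntegrable_id,
    intervalIntegral.integral_const_mul, intervalIntegral.integral_const, integral_id,
    integral_pow]
  norm_num
  ring

lemma setLIntegral_Ioc_zero_one_one_sub_mul_tsum :
    ∫⁻ b in Ioc 0 1, ENNReal.ofReal (1 - b) * ∑' n : ℕ, ENNReal.ofReal (b ^ (n + 1) / (n + 2)) =
      ENNReal.ofReal (Real.pi ^ 2 / 6 - 3 / 2) := by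
  have hmul : ∀ b ∈ Ioc (0 : ℝ) 1,
      ENNReal.ofReal (1 - b) * ∑' n : ℕ, ENNReal.ofReal (b ^ (n + 1) / (n + 2)) =
        ∑' n : ℕ, ENNReal.ofReal ((1 - b) * (b ^ (n + 1) / (n + 2))) := by
    rintro b ⟨hb₀, hb₁⟩
    rw [← ENNReal.tsum_mul_left]
    exact tsum_congr fun n => (ENNReal.ofReal_mul (by linarith)).symm
  have hint : ∀ n : ℕ, ∫ b in (0 : ℝ)..1, (1 - b) * (b ^ (n + 1) / (n + 2)) =
      1 / (((n : ℝ) + 2) ^ 2 * ((n : ℝ) + 3)) := fun n => by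
    simp_rw [show ∀ x : ℝ, (1 - x) * (x ^ (n + 1) / (n + 2)) =
      (x ^ (n + 1) - x ^ (n + 2)) / (n + 2) from fun x => by ring]
    rw [intervalIntegral.integral_div, intervalIntegral.integral_sub
      (intervalIntegral.intervalIntegrable_pow _) (intervalIntegral.intervalIntegrable_pow _),
      integral_pow, integral_pow]
    field_simp
    push_cast
    ring
  rw [setLIntegral_congr_fun measurableSet_Ioc hmul, setLIntegral_Ioc_tsum_ofReal zero_le_one
    (fun n => by fun_prop) (fun n b ⟨hb₀, hb₁⟩ => mul_nonneg (by linarith) (by positivity))]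
  simp_rw [hint]
  rw [← ENNReal.ofReal_tsum_of_nonneg (fun n => by positivity) hasSum_one_div_sq_mul.summable,
    hasSum_one_div_sq_mul.tsum_eq]

lemma lintegral_iterated_inv_sub_mul_add_div (hε : ε ≤ 1) :
    ∫⁻ b in Ioc 0 1, ∫⁻ α in Ioc 0 (1 - b), ∫⁻ a in Ioc (1 - b) 1,
      ENNReal.ofReal ((a⁻¹ - ε * (b + α)) / b) = ENNReal.ofReal (Real.pi ^ 2 / 6 - 1 - ε / 3) := by
  have hinner : ∀ b ∈ Ioc (0 : ℝ) 1, ∫⁻ α in Ioc 0 (1 - b), ∫⁻ a in Ioc (1 - b) 1,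
      ENNReal.ofReal ((a⁻¹ - ε * (b + α)) / b) =
        ENNReal.ofReal ((1 - b) * (1 - ε * (1 + b) / 2)) +
          ENNReal.ofReal (1 - b) * ∑' n : ℕ, ENNReal.ofReal (b ^ (n + 1) / (n + 2)) := by
    rintro b ⟨hb₀, hb₁⟩
    have ha : ∀ α ∈ Ioc 0 (1 - b),
        ∫⁻ a in Ioc (1 - b) 1, ENNReal.ofReal ((a⁻¹ - ε * (b + α)) / b) =
          ENNReal.ofReal (1 - ε * (b + α)) + ∑' n : ℕ, ENNReal.ofReal (b ^ (n + 1) / (n + 2)) := by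
      rintro α ⟨hα₀, hα₁⟩
      rw [← setLIntegral_Ioc_inv_sub_div hb₀ hb₁ (by
        nlinarith [mul_nonneg (sub_nonneg.2 hε) (by linarith : 0 ≤ b + α)])]
      simp_rw [sub_add_sub_cancel]
    rw [setLIntegral_congr_fun measurableSet_Ioc ha, lintegral_add_left (by fun_prop),
      setLIntegral_Ioc_one_sub_mul_add hb₀.le hb₁ hε, setLIntegral_const, Real.volume_Ioc,
      sub_zero]
    ring
  rw [setLIntegral_congr_fun measurableSet_Ioc hinner, lintegral_add_left (by fun_prop),
    setLIntegral_Ioc_zero_one_one_sub_mul hε, setLIntegral_Ioc_zero_one_one_sub_mul_tsum,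
    ← ENNReal.ofReal_add (by linarith) (by nlinarith [Real.pi_gt_three])]
  ring_nf

end

theorem support_at_zero_general (ε : ℝ) (hε1 : ε < 1) :
    ENNReal.ofReal (Real.pi ^ 2 / 6 - 1 - ε / 3) ≤
      volume {p : ℝ × ℝ × ℝ × ℝ |
        0 < p.2.1 ∧ p.2.1 ≤ 1 ∧
        0 < p.2.2.2 ∧ p.2.2.2 ≤ 1 - p.2.1 ∧
        1 - p.2.1 ≤ p.1 ∧ p.1 ≤ 1 ∧
        0 ≤ p.2.2.1 ∧ p.2.2.1 < (p.1⁻¹ - ε * (p.2.1 + p.2.2.2)) / p.2.1} ∧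
    Real.pi ^ 2 / 6 - 1 - 1 / 3 < Real.pi ^ 2 / 6 - 1 - ε / 3 ∧
    (0 : ℝ) < Real.pi ^ 2 / 6 - 1 - 1 / 3 := by
  refine ⟨?_, by linarith, by nlinarith [Real.pi_gt_three]⟩
  rw [← measurePreserving_reorderCoords.measure_preimage_equiv,
    ← lintegral_iterated_inv_sub_mul_add_div hε1.le]
  refine setLIntegral_le_prod_apply measurableSet_Ioc fun b hb => ?_
  refine setLIntegral_le_prod_apply measurableSet_Ioc fun α hα => ?_
  refine setLIntegral_le_prod_apply measurableSet_Ioc fun a ha => ?_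
  rw [← sub_zero ((a⁻¹ - ε * (b + α)) / b), ← Real.volume_Ico]
  exact measure_mono fun s ⟨hs₀, hs₁⟩ => ⟨hb.1, hb.2, hα.1, hα.2, ha.1.le, ha.2, hs₀, hs₁⟩

/-- Support at zero: for ε ∈ (0,1) the set of parameters (a,b,s,α) in Ω₃ with
return time less than ε has Lebesgue measure at least π²/6 - 1 - ε/3,
which exceeds π²/6 - 1 - 1/3 > 0. -/
theorem support_at_zero (ε : ℝ) (hε0 : 0 < ε) (hε1 : ε < 1) :
    ENNReal.ofReal (Real.pi ^ 2 / 6 - 1 - ε / 3) ≤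
      volume {p : ℝ × ℝ × ℝ × ℝ |
        0 < p.2.1 ∧ p.2.1 ≤ 1 ∧
        0 < p.2.2.2 ∧ p.2.2.2 ≤ 1 - p.2.1 ∧
        1 - p.2.1 ≤ p.1 ∧ p.1 ≤ 1 ∧
        0 ≤ p.2.2.1 ∧ p.2.2.1 < (p.1⁻¹ - ε * (p.2.1 + p.2.2.2)) / p.2.1} ∧
    Real.pi ^ 2 / 6 - 1 - 1 / 3 < Real.pi ^ 2 / 6 - 1 - ε / 3 ∧
    (0 : ℝ) < Real.pi ^ 2 / 6 - 1 - 1 / 3 :=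
  support_at_zero_general ε hε1
end
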